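/- arXiv:1910.08548 — 2 statements merged into one kernel-verified Lean document; each statement's English description precedes it below -/
import Mathlib

section
/- Let σ₁ and σ₂ be finite positive Borel measures with compact supports contained in disjoint intervals Δ₁ and Δ₂ of the real line, each support containing infinitely many points. For the type II multiple orthogonal polynomial Q_n (a nonzero polynomial of degree at most n₁+n₂ satisfying ∫ xᵏ Q_n(x) dσⱼ(x) = 0 for k = 0,…,nⱼ−1 and j = 1,2), Q_n has exactly nⱼ simple zeros in the interior of Δⱼ for j = 1,2, and hence deg Q_n = n₁+n₂. Consequently Angelesco systems of two measures are type II perfect. -/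
open MeasureTheory Polynomial

/-- Topological support of a measure on ℝ. -/
def msupport (σ : Measure ℝ) : Set ℝ := {x : ℝ | ∀ U ∈ nhds x, σ U ≠ 0}


lemma measure_compl_msupport (σ : Measure ℝ) : σ (msupport σ)ᶜ = 0 := by
  classical
  set B := TopologicalSpace.countableBasis ℝ with hB
  have hbasis := TopologicalSpace.isBasis_countableBasis ℝ
  have hcover : (msupport σ)ᶜ ⊆ ⋃ U ∈ {U ∈ B | σ U = 0}, U := by
    intro x hx
    simp only [Set.mem_compl_iff, msupport, Set.mem_setOf_eq, not_forall] at hx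
    obtain ⟨U, hU, hU0⟩ := hx
    push_neg at hU0
    obtain ⟨V, hVB, hxV, hVU⟩ := hbasis.mem_nhds_iff.mp hU
    exact Set.mem_biUnion ⟨hVB, measure_mono_null hVU hU0⟩ hxV
  refine measure_mono_null hcover ?_
  refine (measure_biUnion_null_iff ?_).2 ?_
  · exact (TopologicalSpace.countable_countableBasis ℝ).mono (Set.sep_subset _ _)
  · exact fun U hU => hU.2

lemma const_sign_aux (a b : ℝ) : ∀ n : ℕ, ∀ g : Polynomial ℝ, g.natDegree ≤ n → g ≠ 0 →
    (∀ x ∈ Set.Ioo a b, Even (g.rootMultiplicity x)) →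
    (∀ x ∈ Set.Ioo a b, 0 ≤ g.eval x) ∨ (∀ x ∈ Set.Ioo a b, g.eval x ≤ 0) := by
  intro n
  induction n using Nat.strong_induction_on with
  | _ n ih =>
    intro g hn hg h
    by_cases hroot : ∃ c ∈ Set.Ioo a b, g.IsRoot c
    · obtain ⟨c, hc, hcr⟩ := hroot
      have hm := (rootMultiplicity_pos hg).2 hcr
      have heven := h c hc
      have hm2 : 2 ≤ g.rootMultiplicity c := by
        rcases heven with ⟨k, hk⟩; omega
      have hdvd : (X - C c) ^ 2 ∣ g :=
        dvd_trans (pow_dvd_pow _ hm2) (g.pow_rootMultiplicity_dvd c)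
      obtain ⟨g₁, hg₁⟩ := hdvd
      have hg₁0 : g₁ ≠ 0 := by rintro rfl; simp at hg₁; exact hg hg₁
      have hXc : ((X : ℝ[X]) - C c) ^ 2 ≠ 0 := pow_ne_zero _ (X_sub_C_ne_zero c)
      have hdeg : g.natDegree = 2 + g₁.natDegree := by
        rw [hg₁, natDegree_mul hXc hg₁0, natDegree_pow, natDegree_X_sub_C, mul_one]
      have hn1 : g.natDegree ≠ 0 := by omega
      have hmult : ∀ x ∈ Set.Ioo a b, Even (g₁.rootMultiplicity x) := by
        intro x hx
        have hthis := h x hx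
        rw [hg₁, rootMultiplicity_mul (hg₁ ▸ hg)] at hthis
        have hpow : rootMultiplicity x (((X : ℝ[X]) - C c) ^ 2) =
            if x = c then 2 else 0 := by
          by_cases hxc : x = c
          · subst hxc; simp [rootMultiplicity_X_sub_C_pow]
          · simp only [if_neg hxc]
            apply rootMultiplicity_eq_zero
            simp [IsRoot, sub_eq_zero, hxc]
        rw [hpow] at hthis
        rcases hthis with ⟨k, hk⟩
        by_cases hxc : x = c
        · rw [if_pos hxc] at hk; exact ⟨k - 1, by omega⟩
        · rw [if_neg hxc] at hk; exact ⟨k, by omega⟩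
      have := ih g₁.natDegree (by omega) g₁ le_rfl hg₁0 hmult
      rcases this with H | H
      · left; intro x hx
        rw [hg₁]; simp only [eval_mul, eval_pow, eval_sub, eval_X, eval_C]
        exact mul_nonneg (sq_nonneg _) (H x hx)
      · right; intro x hx
        rw [hg₁]; simp only [eval_mul, eval_pow, eval_sub, eval_X, eval_C]
        exact mul_nonpos_of_nonneg_of_nonpos (sq_nonneg _) (H x hx)
    · push_neg at hroot
      by_contra hcon
      push_neg at hcon
      obtain ⟨⟨u, hu, hu0⟩, ⟨v, hv, hv0⟩⟩ := hcon
      have hcont : ContinuousOn (fun x => g.eval x) (Set.uIcc u v) :=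
        (Polynomial.continuous g).continuousOn
      have hmem : (0:ℝ) ∈ Set.uIcc (g.eval u) (g.eval v) := by
        rw [Set.mem_uIcc]
        left; exact ⟨le_of_lt hu0, le_of_lt hv0⟩
      obtain ⟨c, hc, hc0⟩ := intermediate_value_uIcc hcont hmem
      have hcIoo : c ∈ Set.Ioo a b := by
        rcases Set.mem_uIcc.mp hc with hm | hm
        · exact ⟨lt_of_lt_of_le hu.1 hm.1, lt_of_le_of_lt hm.2 hv.2⟩
        · exact ⟨lt_of_lt_of_le hv.1 hm.1, lt_of_le_of_lt hm.2 hu.2⟩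
      exact hroot c hcIoo hc0

lemma const_sign (a b : ℝ) (g : Polynomial ℝ) (hg : g ≠ 0)
    (h : ∀ x ∈ Set.Ioo a b, Even (g.rootMultiplicity x)) :
    (∀ x ∈ Set.Icc a b, 0 ≤ g.eval x) ∨ (∀ x ∈ Set.Icc a b, g.eval x ≤ 0) := by
  rcases le_or_gt b a with hba | hab
  · rcases lt_or_eq_of_le hba with hlt | heq
    · left; intro x hx; exact absurd (hx.1.trans hx.2) (not_le.2 hlt)
    · subst heq
      rcases le_total 0 (g.eval b) with h0 | h0
      · left; intro x hx; rw [le_antisymm hx.2 hx.1]; exact h0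
      · right; intro x hx; rw [le_antisymm hx.2 hx.1]; exact h0
  · have H := const_sign_aux a b g.natDegree g le_rfl hg h
    have hcl : Set.Icc a b = closure (Set.Ioo a b) := (closure_Ioo hab.ne).symm
    rcases H with H | H
    · left; intro x hx
      rw [hcl] at hx
      exact closure_minimal H (isClosed_le continuous_const (Polynomial.continuous g)) hx
    · right; intro x hx
      rw [hcl] at hx
      exact closure_minimal H (isClosed_le (Polynomial.continuous g) continuous_const) hx

lemma restrict_eq (σ : Measure ℝ) (a b : ℝ) (hsupp : msupport σ ⊆ Set.Icc a b) :
    σ.restrict (Set.Icc a b) = σ := by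
  apply Measure.restrict_eq_self_of_ae_mem
  have : σ (Set.Icc a b)ᶜ = 0 :=
    measure_mono_null (Set.compl_subset_compl.2 hsupp) (measure_compl_msupport σ)
  rw [Set.compl_def] at this
  exact ae_iff.2 this

lemma integrable_cont (σ : Measure ℝ) [IsFiniteMeasure σ] (a b : ℝ)
    (hsupp : msupport σ ⊆ Set.Icc a b) (f : ℝ → ℝ) (hf : Continuous f) :
    Integrable f σ := by
  rw [← restrict_eq σ a b hsupp]
  exact hf.continuousOn.integrableOn_compact isCompact_Icc

lemma pos_integral (σ : Measure ℝ) [IsFiniteMeasure σ] (a b : ℝ)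
    (hsupp : msupport σ ⊆ Set.Icc a b) (hinf : (msupport σ).Infinite)
    (g : Polynomial ℝ) (hg : g ≠ 0) (hsign : ∀ x ∈ Set.Icc a b, 0 ≤ g.eval x) :
    0 < ∫ x, g.eval x ∂σ := by
  have hnull : σ (Set.Icc a b)ᶜ = 0 :=
    measure_mono_null (Set.compl_subset_compl.2 hsupp) (measure_compl_msupport σ)
  have hae : 0 ≤ᵐ[σ] fun x => g.eval x := by
    refine (ae_iff.2 (measure_mono_null ?_ hnull))
    intro x hx
    simp only [Pi.zero_apply, Set.mem_setOf_eq, not_le] at hx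
    exact fun hmem => absurd (hsign x hmem) (not_le.2 hx)
  have hint : Integrable (fun x => g.eval x) σ :=
    integrable_cont σ a b hsupp _ (Polynomial.continuous g)
  have hge : 0 ≤ ∫ x, g.eval x ∂σ := integral_nonneg_of_ae hae
  rcases hge.lt_or_eq with h | h
  · exact h
  · exfalso
    have hzero : (fun x => g.eval x) =ᵐ[σ] 0 :=
      (integral_eq_zero_iff_of_nonneg_ae hae hint).1 h.symm
    -- g vanishes on msupport σ
    have hsub : msupport σ ⊆ {x | g.IsRoot x} := by
      intro x hx
      by_contra hgx
      have hopen : IsOpen {y | g.eval y ≠ 0} :=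
        isOpen_ne.preimage (Polynomial.continuous g)
      have hmem : {y | g.eval y ≠ 0} ∈ nhds x := hopen.mem_nhds hgx
      have : σ {y | g.eval y ≠ 0} = 0 := by
        have := hzero
        rw [Filter.EventuallyEq, ae_iff] at this
        simpa using this
      exact hx _ hmem this
    exact (hinf.mono hsub) (finite_setOf_isRoot hg)

lemma orth_int (σ : Measure ℝ) [IsFiniteMeasure σ] (a b : ℝ)
    (hsupp : msupport σ ⊆ Set.Icc a b) (n : ℕ) (Q P : Polynomial ℝ)
    (horth : ∀ k < n, ∫ x, x ^ k * Q.eval x ∂σ = 0) (hP : P.natDegree < n) :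
    ∫ x, (P * Q).eval x ∂σ = 0 := by
  have hint : ∀ k : ℕ, Integrable (fun x => x ^ k * Q.eval x) σ := fun k =>
    integrable_cont σ a b hsupp _ ((continuous_pow k).mul (Polynomial.continuous Q))
  have heq : ∀ x : ℝ, (P * Q).eval x =
      ∑ k ∈ Finset.range (P.natDegree + 1), P.coeff k * (x ^ k * Q.eval x) := by
    intro x
    rw [eval_mul, eval_eq_sum_range, Finset.sum_mul]
    exact Finset.sum_congr rfl fun k _ => by ring
  simp_rw [heq]
  rw [integral_finset_sum _ (fun k _ => (hint k).const_mul _)]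
  refine Finset.sum_eq_zero fun k hk => ?_
  rw [integral_const_mul, horth k (by have := Finset.mem_range.mp hk; omega), mul_zero]

open Classical in
noncomputable def oddRoots (Q : Polynomial ℝ) (a b : ℝ) : Finset ℝ :=
  Q.roots.toFinset.filter (fun x => x ∈ Set.Ioo a b ∧ Odd (Q.rootMultiplicity x))

lemma mem_oddRoots {Q : Polynomial ℝ} {a b x : ℝ} (hQ : Q ≠ 0) :
    x ∈ oddRoots Q a b ↔ Q.IsRoot x ∧ x ∈ Set.Ioo a b ∧ Odd (Q.rootMultiplicity x) := by
  classical
  simp [oddRoots, Multiset.mem_toFinset, mem_roots hQ]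

lemma card_ge (σ : Measure ℝ) [IsFiniteMeasure σ] (a b : ℝ)
    (hsupp : msupport σ ⊆ Set.Icc a b) (hinf : (msupport σ).Infinite)
    (n : ℕ) (Q : Polynomial ℝ) (hQ : Q ≠ 0)
    (horth : ∀ k < n, ∫ x, x ^ k * Q.eval x ∂σ = 0) :
    n ≤ (oddRoots Q a b).card := by
  classical
  by_contra hlt
  push_neg at hlt
  set S := oddRoots Q a b with hS
  set P : Polynomial ℝ := ∏ x ∈ S, (X - C x) with hPdef
  have hPmonic : P.Monic := monic_prod_of_monic _ _ fun x _ => monic_X_sub_C x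
  have hP0 : P ≠ 0 := hPmonic.ne_zero
  have hPdeg : P.natDegree = S.card := by
    rw [hPdef, natDegree_prod _ _ fun x _ => X_sub_C_ne_zero x]
    simp [natDegree_X_sub_C]
  have hPQ : P * Q ≠ 0 := mul_ne_zero hP0 hQ
  have hPmult : ∀ x : ℝ, P.rootMultiplicity x = if x ∈ S then 1 else 0 := by
    intro x
    rw [← count_roots, hPdef, roots_prod_X_sub_C]
    by_cases hx : x ∈ S
    · rw [if_pos hx]
      exact Multiset.count_eq_one_of_mem S.nodup hx
    · rw [if_neg hx]
      exact Multiset.count_eq_zero.2 hx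
  have heven : ∀ x ∈ Set.Ioo a b, Even ((P * Q).rootMultiplicity x) := by
    intro x hx
    rw [rootMultiplicity_mul hPQ, hPmult x]
    by_cases hxS : x ∈ S
    · rw [if_pos hxS]
      obtain ⟨-, -, k, hk⟩ := (mem_oddRoots hQ).1 hxS
      exact ⟨k + 1, by omega⟩
    · rw [if_neg hxS, zero_add]
      by_cases hroot : Q.IsRoot x
      · rcases Nat.even_or_odd (Q.rootMultiplicity x) with he | ho
        · exact he
        · exact absurd ((mem_oddRoots hQ).2 ⟨hroot, hx, ho⟩) hxS
      · rw [rootMultiplicity_eq_zero hroot]; exact Even.zero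
  have hzero : ∫ x, (P * Q).eval x ∂σ = 0 :=
    orth_int σ a b hsupp n Q P horth (hPdeg ▸ hlt)
  rcases const_sign a b (P * Q) hPQ heven with H | H
  · exact absurd hzero (ne_of_gt (pos_integral σ a b hsupp hinf _ hPQ H))
  · have hneg : ∀ x ∈ Set.Icc a b, 0 ≤ (-(P * Q)).eval x := by
      intro x hx; rw [eval_neg]; linarith [H x hx]
    have := pos_integral σ a b hsupp hinf _ (neg_ne_zero.2 hPQ) hneg
    simp only [eval_neg, integral_neg, hzero, neg_zero] at this
    exact lt_irrefl 0 this

/-- Angelesco systems of two measures are type II perfect: the type II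
polynomial `Q` has exactly `nⱼ` simple zeros in the interior of `Δⱼ`, `j = 1,2`, and
`deg Q = n₁ + n₂`. -/
theorem stmt2 (a₁ b₁ a₂ b₂ : ℝ) (h₁ : a₁ ≤ b₁) (h₂ : a₂ ≤ b₂)
    (hdisj : Disjoint (Set.Icc a₁ b₁) (Set.Icc a₂ b₂))
    (σ₁ σ₂ : Measure ℝ) [IsFiniteMeasure σ₁] [IsFiniteMeasure σ₂]
    (hco₁ : convexHull ℝ (msupport σ₁) = Set.Icc a₁ b₁)
    (hco₂ : convexHull ℝ (msupport σ₂) = Set.Icc a₂ b₂)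
    (hinf₁ : (msupport σ₁).Infinite) (hinf₂ : (msupport σ₂).Infinite)
    (n₁ n₂ : ℕ) (Q : Polynomial ℝ) (hQ : Q ≠ 0) (hdeg : Q.natDegree ≤ n₁ + n₂)
    (horth₁ : ∀ k < n₁, ∫ x, x ^ k * Q.eval x ∂σ₁ = 0)
    (horth₂ : ∀ k < n₂, ∫ x, x ^ k * Q.eval x ∂σ₂ = 0) :
    Q.natDegree = n₁ + n₂ ∧ Q.roots.Nodup ∧
      {x : ℝ | Q.IsRoot x ∧ x ∈ interior (Set.Icc a₁ b₁)}.ncard = n₁ ∧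
      {x : ℝ | Q.IsRoot x ∧ x ∈ interior (Set.Icc a₂ b₂)}.ncard = n₂ := by
  classical
  have hsupp₁ : msupport σ₁ ⊆ Set.Icc a₁ b₁ := hco₁ ▸ subset_convexHull ℝ _
  have hsupp₂ : msupport σ₂ ⊆ Set.Icc a₂ b₂ := hco₂ ▸ subset_convexHull ℝ _
  set S₁ := oddRoots Q a₁ b₁ with hS₁
  set S₂ := oddRoots Q a₂ b₂ with hS₂
  have hn₁ : n₁ ≤ S₁.card := card_ge σ₁ a₁ b₁ hsupp₁ hinf₁ n₁ Q hQ horth₁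
  have hn₂ : n₂ ≤ S₂.card := card_ge σ₂ a₂ b₂ hsupp₂ hinf₂ n₂ Q hQ horth₂
  have hdisjS : Disjoint S₁ S₂ := by
    rw [Finset.disjoint_left]
    intro x hx₁ hx₂
    have h1 := ((mem_oddRoots hQ).1 hx₁).2.1
    have h2 := ((mem_oddRoots hQ).1 hx₂).2.1
    exact (Set.disjoint_left.1 hdisj) (Set.Ioo_subset_Icc_self h1)
      (Set.Ioo_subset_Icc_self h2)
  have hsubT : S₁ ∪ S₂ ⊆ Q.roots.toFinset := by
    intro x hx
    rcases Finset.mem_union.1 hx with hx | hx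
    · exact Multiset.mem_toFinset.2 ((mem_roots hQ).2 ((mem_oddRoots hQ).1 hx).1)
    · exact Multiset.mem_toFinset.2 ((mem_roots hQ).2 ((mem_oddRoots hQ).1 hx).1)
  have hcard1 : (S₁ ∪ S₂).card = S₁.card + S₂.card := Finset.card_union_of_disjoint hdisjS
  have hcard2 : (S₁ ∪ S₂).card ≤ Q.roots.toFinset.card := Finset.card_le_card hsubT
  have hcard3 : Q.roots.toFinset.card ≤ Multiset.card Q.roots := Q.roots.toFinset_card_le
  have hcard4 : Multiset.card Q.roots ≤ Q.natDegree := Q.card_roots'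
  have hchain : n₁ + n₂ ≤ (S₁ ∪ S₂).card := by omega
  have hdegeq : Q.natDegree = n₁ + n₂ := le_antisymm hdeg (by omega)
  have htFcard : Q.roots.toFinset.card = Multiset.card Q.roots := by omega
  have hnodup : Q.roots.Nodup := by
    have hdedup : Multiset.card Q.roots.dedup = Multiset.card Q.roots := by
      rw [Multiset.card_toFinset] at htFcard
      exact htFcard
    have : Q.roots = Q.roots.dedup :=
      (Multiset.eq_of_le_of_card_le (Multiset.dedup_le _) (by omega)).symm
    rw [this]
    exact Multiset.nodup_dedup _
  have hUeq : S₁ ∪ S₂ = Q.roots.toFinset :=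
    Finset.eq_of_subset_of_card_le hsubT (by omega)
  have hc₁ : S₁.card = n₁ := by omega
  have hc₂ : S₂.card = n₂ := by omega
  refine ⟨hdegeq, hnodup, ?_, ?_⟩
  · have hset : {x : ℝ | Q.IsRoot x ∧ x ∈ interior (Set.Icc a₁ b₁)} = ↑S₁ := by
      ext x
      simp only [Set.mem_setOf_eq, interior_Icc, Finset.coe_sort_coe, Finset.mem_coe]
      constructor
      · rintro ⟨hroot, hIoo⟩
        have hxT : x ∈ S₁ ∪ S₂ := hUeq ▸ Multiset.mem_toFinset.2 ((mem_roots hQ).2 hroot)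
        rcases Finset.mem_union.1 hxT with hx | hx
        · exact hx
        · exact absurd (Set.disjoint_left.1 hdisj (Set.Ioo_subset_Icc_self hIoo)
            (Set.Ioo_subset_Icc_self ((mem_oddRoots hQ).1 hx).2.1)) (fun h => h)
      · intro hx
        exact ⟨((mem_oddRoots hQ).1 hx).1, ((mem_oddRoots hQ).1 hx).2.1⟩
    rw [hset, Set.ncard_coe_finset, hc₁]
  · have hset : {x : ℝ | Q.IsRoot x ∧ x ∈ interior (Set.Icc a₂ b₂)} = ↑S₂ := by
      ext x
      simp only [Set.mem_setOf_eq, interior_Icc, Finset.coe_sort_coe, Finset.mem_coe]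
      constructor
      · rintro ⟨hroot, hIoo⟩
        have hxT : x ∈ S₁ ∪ S₂ := hUeq ▸ Multiset.mem_toFinset.2 ((mem_roots hQ).2 hroot)
        rcases Finset.mem_union.1 hxT with hx | hx
        · exact absurd (Set.disjoint_left.1 hdisj
            (Set.Ioo_subset_Icc_self ((mem_oddRoots hQ).1 hx).2.1)
            (Set.Ioo_subset_Icc_self hIoo)) (fun h => h)
        · exact hx
      · intro hx
        exact ⟨((mem_oddRoots hQ).1 hx).1, ((mem_oddRoots hQ).1 hx).2.1⟩
    rw [hset, Set.ncard_coe_finset, hc₂]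
end

section
/- For a single Markov function (m = 1): let σ ∈ 𝓜(Δ) and w a real polynomial with zeros in ℂ∖Δ such that ℓ₀ + ℓ₁σ̂ vanishes at the zeros of w (with multiplicity) and (ℓ₀ + ℓ₁σ̂)(z)/w(z) = O(1/z^N), N ≥ 1, as z → ∞. Then (ℓ₀(z) + ℓ₁(z)σ̂(z))/w(z) = ∫ ℓ₁(x)/(z−x) · dσ(x)/w(x) for all z ∈ ℂ∖Δ outside the zeros of w. -/
/-!
Let `c = ℓ₁/w` on `Δ` and let `G(z) = ∫ c(x)/(z-x) dσ(x)` be the Cauchy transform of `c·σ`,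
holomorphic off `Δ` and vanishing at infinity. With `F = (ℓ₀ + ℓ₁σ̂)/w`, the identity
`ℓ₁(z) - w(z)c(x) = (ℓ₁(z) - ℓ₁(x)) - c(x)(w(z) - w(x))` shows that `w(F - G)` equals
`ℓ₀` plus the integral of divided differences of `ℓ₁` and `w`, a polynomial in `z`.
Hence `F - G` agrees near `Δ`, where `w ≠ 0`, with an entire function divided by `w`, so it
extends to an entire function tending to `0` at infinity, and vanishes by Liouville.
-/

open MeasureTheory Polynomial

/-- The Cauchy transform `σ̂(z) = ∫ dσ(x)/(z-x)`. -/
noncomputable def cauchyT (σ : Measure ℝ) (z : ℂ) : ℂ := ∫ x, (z - (x : ℂ))⁻¹ ∂σ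

open Filter Topology Finset

lemma msupport_eq_support (σ : Measure ℝ) : msupport σ = σ.support := by
  ext x
  simp [msupport, Measure.mem_support_iff_forall, pos_iff_ne_zero]

lemma ae_mem_of_msupport_subset {σ : Measure ℝ} {s : Set ℝ} (hs : msupport σ ⊆ s) :
    ∀ᵐ x ∂σ, x ∈ s :=
  mem_of_superset Measure.support_mem_ae (msupport_eq_support σ ▸ hs)

lemma integrable_of_continuousOn_of_ae_mem {μ : Measure ℝ} [IsFiniteMeasure μ] {s : Set ℝ}
    (hs : IsCompact s) (hμs : ∀ᵐ x ∂μ, x ∈ s) {f : ℝ → ℂ} (hf : ContinuousOn f s) :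
    Integrable f μ := by
  rw [← Measure.restrict_eq_self_of_ae_mem hμs]
  exact hf.integrableOn_compact hs

section DividedDifference

/-- The divided difference `(p(z) - p(x))/(z - x)`, written as a polynomial in `z` and `x`,
so that it is also meaningful on the diagonal. -/
noncomputable def divDiff (p : ℂ[X]) (z x : ℂ) : ℂ :=
  ∑ j ∈ range (p.natDegree + 1), p.coeff j * ∑ k ∈ range j, z ^ k * x ^ (j - 1 - k)

lemma sub_mul_divDiff (p : ℂ[X]) (z x : ℂ) :
    (z - x) * divDiff p z x = p.eval z - p.eval x := by
  rw [eval_eq_sum_range, eval_eq_sum_range, ← sum_sub_distrib, divDiff, mul_sum]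
  refine sum_congr rfl fun j _ => ?_
  rw [← mul_sub, ← geom_sum₂_mul]
  ring

lemma divDiff_eq_div (p : ℂ[X]) {z x : ℂ} (h : z ≠ x) :
    divDiff p z x = (p.eval z - p.eval x) / (z - x) := by
  rw [← sub_mul_divDiff, mul_div_cancel_left₀ _ (sub_ne_zero.mpr h)]

lemma continuous_divDiff (p : ℂ[X]) (z : ℂ) : Continuous (divDiff p z) := by
  unfold divDiff
  fun_prop

variable {μ : Measure ℝ} {g : ℝ → ℂ}

lemma integral_mul_divDiff (hg : ∀ m : ℕ, Integrable (fun x => g x * (x : ℂ) ^ m) μ)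
    (p : ℂ[X]) (z : ℂ) :
    ∫ x, g x * divDiff p z x ∂μ
      = ∑ j ∈ range (p.natDegree + 1), ∑ k ∈ range j,
          p.coeff j * z ^ k * ∫ x, g x * (x : ℂ) ^ (j - 1 - k) ∂μ := by
  have hint : ∀ j k, Integrable (fun x => p.coeff j * z ^ k * (g x * (x : ℂ) ^ (j - 1 - k))) μ :=
    fun j k => (hg _).const_mul _
  have hexp : ∀ x : ℝ, g x * divDiff p z x = ∑ j ∈ range (p.natDegree + 1), ∑ k ∈ range j,
      p.coeff j * z ^ k * (g x * (x : ℂ) ^ (j - 1 - k)) := fun x => by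
    simp only [divDiff, mul_sum]
    exact sum_congr rfl fun j _ => sum_congr rfl fun k _ => by ring
  simp_rw [hexp, ← integral_const_mul]
  rw [integral_finsetSum _ fun j _ => integrable_finsetSum _ fun k _ => hint j k]
  exact sum_congr rfl fun j _ => integral_finsetSum _ fun k _ => hint j k

lemma differentiable_integral_mul_divDiff
    (hg : ∀ m : ℕ, Integrable (fun x => g x * (x : ℂ) ^ m) μ) (p : ℂ[X]) :
    Differentiable ℂ fun z => ∫ x, g x * divDiff p z x ∂μ := by
  simp_rw [integral_mul_divDiff hg]
  fun_prop

end DividedDifference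

section CauchyTransform

variable {μ : Measure ℝ} [IsFiniteMeasure μ] {c : ℝ → ℂ} {M : ℝ}

open Metric in
lemma differentiableAt_integral_div_sub (hc : AEStronglyMeasurable c μ)
    (hM : ∀ᵐ x ∂μ, ‖c x‖ ≤ M) {K : Set ℂ} (hK : IsClosed K) (hμK : ∀ᵐ x : ℝ ∂μ, (x : ℂ) ∈ K)
    {z₀ : ℂ} (hz₀ : z₀ ∉ K) :
    DifferentiableAt ℂ (fun z => ∫ x, c x / (z - x) ∂μ) z₀ := by
  obtain ⟨ε, hε, hball⟩ := isOpen_iff.mp hK.isOpen_compl z₀ hz₀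
  have hsep : ∀ᵐ (x : ℝ) ∂μ, ∀ z ∈ ball z₀ (ε / 2), ε / 2 ≤ ‖z - (x : ℂ)‖ := by
    filter_upwards [hμK] with x hx z hz
    have hxε : ε ≤ dist (x : ℂ) z₀ := not_lt.mp fun h => hball (mem_ball.mpr h) hx
    have := dist_triangle (x : ℂ) z z₀
    rw [mem_ball] at hz
    rw [← dist_eq_norm, dist_comm]
    linarith
  have hmeas : ∀ z : ℂ, AEStronglyMeasurable (fun x : ℝ => c x / (z - x)) μ := fun z =>
    hc.div₀ (by fun_prop)
  refine (hasDerivAt_integral_of_dominated_loc_of_deriv_le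
    (F' := fun z x => -(c x / (z - x) ^ 2)) (bound := fun _ => M / (ε / 2) ^ 2)
    (ball_mem_nhds z₀ (half_pos hε)) (Eventually.of_forall hmeas) ?_ ?_ ?_
    (integrable_const _) ?_).2.differentiableAt
  · refine Integrable.mono' (integrable_const (M / (ε / 2))) (hmeas z₀) ?_
    filter_upwards [hM, hsep] with x hcx hx
    rw [norm_div]
    exact div_le_div₀ ((norm_nonneg _).trans hcx) hcx (half_pos hε)
      (hx z₀ (mem_ball_self (half_pos hε)))
  · exact (hc.div₀ (by fun_prop)).neg
  · filter_upwards [hM, hsep] with x hcx hx z hz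
    rw [norm_neg, norm_div, norm_pow]
    exact div_le_div₀ ((norm_nonneg _).trans hcx) hcx (by positivity)
      (pow_le_pow_left₀ (half_pos hε).le (hx z hz) 2)
  · filter_upwards [hsep] with x hx z hz
    have hne : z - x ≠ 0 := norm_pos_iff.mp ((half_pos hε).trans_le (hx z hz))
    simpa [div_eq_mul_inv] using ((hasDerivAt_id z).sub_const (x : ℂ)).inv hne |>.const_mul (c x)

lemma tendsto_integral_div_sub_cocompact (hM : ∀ᵐ x ∂μ, ‖c x‖ ≤ M) {r : ℝ}
    (hr : ∀ᵐ x ∂μ, |x| ≤ r) :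
    Tendsto (fun z => ∫ x, c x / (z - x) ∂μ) (cocompact ℂ) (𝓝 0) := by
  have hbound : ∀ᶠ z : ℂ in cocompact ℂ,
      ‖∫ x, c x / (z - x) ∂μ‖ ≤ 2 * M * μ.real Set.univ / ‖z‖ := by
    filter_upwards [tendsto_norm_cocompact_atTop.eventually_ge_atTop (max (2 * r) 1)] with z hz
    have hz0 : 0 < ‖z‖ := one_pos.trans_le ((le_max_right _ _).trans hz)
    have hpt : ∀ᵐ x ∂μ, ‖c x / (z - x)‖ ≤ M / (‖z‖ / 2) := by
      filter_upwards [hM, hr] with x hcx hx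
      have hzx : ‖z‖ / 2 ≤ ‖z - x‖ := by
        have := norm_sub_norm_le z (x : ℂ)
        rw [Complex.norm_real, Real.norm_eq_abs] at this
        linarith [le_max_left (2 * r) 1]
      rw [norm_div]
      exact div_le_div₀ ((norm_nonneg _).trans hcx) hcx (half_pos hz0) hzx
    calc ‖∫ x, c x / (z - x) ∂μ‖ ≤ M / (‖z‖ / 2) * μ.real Set.univ :=
          norm_integral_le_of_norm_le_const hpt
      _ = 2 * M * μ.real Set.univ / ‖z‖ := by field_simp
  exact squeeze_zero_norm' hbound (tendsto_const_nhds.div_atTop tendsto_norm_cocompact_atTop)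

end CauchyTransform

lemma tendsto_cocompact_zero_of_norm_le_div_pow {f : ℂ → ℂ} {N : ℕ} (hN : 1 ≤ N)
    (hf : ∃ C R : ℝ, ∀ z : ℂ, R ≤ ‖z‖ → ‖f z‖ ≤ C / ‖z‖ ^ N) :
    Tendsto f (cocompact ℂ) (𝓝 0) := by
  obtain ⟨C, R, hCR⟩ := hf
  exact squeeze_zero_norm' (tendsto_norm_cocompact_atTop.eventually_ge_atTop R |>.mono hCR)
    (tendsto_const_nhds.div_atTop
      ((tendsto_pow_atTop (Nat.one_le_iff_ne_zero.mp hN)).comp tendsto_norm_cocompact_atTop))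

/-- Near `K` the function `H` coincides with `P / W`, so it extends across `K` to an entire
function, and Liouville applies. -/
lemma eqOn_zero_of_mul_eq_of_tendsto {K : Set ℂ} (hK : IsCompact K) {H P W : ℂ → ℂ}
    (hH : DifferentiableOn ℂ H Kᶜ) (hP : Differentiable ℂ P) (hW : Differentiable ℂ W)
    (hWK : ∀ z ∈ K, W z ≠ 0) (hWH : ∀ z ∉ K, W z * H z = P z)
    (hlim : Tendsto H (cocompact ℂ) (𝓝 0)) : ∀ z ∉ K, H z = 0 := by
  classical
  set H' : ℂ → ℂ := K.piecewise (fun z => P z / W z) H with hH'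
  have hdiff : Differentiable ℂ H' := by
    intro z
    by_cases hz : z ∈ K
    · refine ((hP z).div (hW z) (hWK z hz)).congr_of_eventuallyEq ?_
      filter_upwards [hW.continuous.continuousAt.eventually_ne (hWK z hz)] with y hy
      by_cases hy' : y ∈ K
      · simp [hH', hy']
      · simp [hH', hy', eq_div_iff hy, ← hWH y hy', mul_comm]
    · refine (hH.differentiableAt (hK.isClosed.isOpen_compl.mem_nhds hz)).congr_of_eventuallyEq ?_
      filter_upwards [hK.isClosed.isOpen_compl.mem_nhds hz] with y hy
      simp [hH', Set.piecewise_eq_of_notMem _ _ _ hy]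
  have hlim' : Tendsto H' (cocompact ℂ) (𝓝 0) :=
    hlim.congr' (Filter.mem_of_superset hK.compl_mem_cocompact fun z hz =>
      (Set.piecewise_eq_of_notMem _ _ _ hz).symm)
  intro z hz
  simpa [hH', hz] using hdiff.apply_eq_of_tendsto_cocompact z hlim'

/-- Off the support of `μ` this is `P μ̂ - W · ((P/W) μ)^`, but it is a polynomial in `z`. -/
noncomputable def divDiffIntegral (μ : Measure ℝ) (P W : ℂ[X]) (z : ℂ) : ℂ :=
  ∫ x, divDiff P z x ∂μ - ∫ x, P.eval (x : ℂ) / W.eval (x : ℂ) * divDiff W z x ∂μ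

section DivDiffIntegral

variable {μ : Measure ℝ} [IsFiniteMeasure μ] {s : Set ℝ} (P W : ℂ[X])

lemma differentiable_divDiffIntegral (hs : IsCompact s) (hμs : ∀ᵐ x ∂μ, x ∈ s)
    (hW : ∀ x ∈ s, W.eval (x : ℂ) ≠ 0) : Differentiable ℂ (divDiffIntegral μ P W) := by
  have hmom : ∀ {g : ℝ → ℂ}, ContinuousOn g s → ∀ m : ℕ,
      Integrable (fun x => g x * (x : ℂ) ^ m) μ := fun hg m =>
    integrable_of_continuousOn_of_ae_mem hs hμs (hg.mul (by fun_prop))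
  refine .sub ?_ (differentiable_integral_mul_divDiff
    (hmom (ContinuousOn.div (by fun_prop) (by fun_prop) hW)) W)
  simpa only [one_mul] using
    differentiable_integral_mul_divDiff (hmom (g := fun _ => 1) continuousOn_const) P

lemma eval_mul_cauchyT_sub_eq_divDiffIntegral (hs : IsCompact s) (hμs : ∀ᵐ x ∂μ, x ∈ s)
    (hW : ∀ x ∈ s, W.eval (x : ℂ) ≠ 0) {z : ℂ} (hz : z ∉ ((↑) : ℝ → ℂ) '' s) :
    P.eval z * cauchyT μ z - W.eval z * ∫ x, P.eval (x : ℂ) / W.eval (x : ℂ) / (z - x) ∂μ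
      = divDiffIntegral μ P W z := by
  have hzx : ∀ x ∈ s, z - x ≠ 0 := fun x hx h => hz ⟨x, hx, (sub_eq_zero.mp h).symm⟩
  have hPW : ContinuousOn (fun x : ℝ => P.eval (x : ℂ) / W.eval (x : ℂ)) s :=
    ContinuousOn.div (by fun_prop) (by fun_prop) hW
  have hinv : ContinuousOn (fun x : ℝ => (z - x)⁻¹) s := ContinuousOn.inv₀ (by fun_prop) hzx
  have hdd : ∀ p : ℂ[X], ContinuousOn (fun x : ℝ => divDiff p z x) s := fun p =>
    ((continuous_divDiff p z).comp Complex.continuous_ofReal).continuousOn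
  have hint := fun {f : ℝ → ℂ} (hf : ContinuousOn f s) =>
    integrable_of_continuousOn_of_ae_mem hs hμs hf
  rw [cauchyT, divDiffIntegral, ← integral_const_mul, ← integral_const_mul,
    ← integral_sub ((hint hinv).const_mul _)
      ((hint (f := fun x : ℝ => P.eval (x : ℂ) / W.eval (x : ℂ) / (z - x))
        (hPW.div (by fun_prop) hzx)).const_mul _),
    ← integral_sub (hint (hdd P))
      (hint (f := fun x : ℝ => P.eval (x : ℂ) / W.eval (x : ℂ) * divDiff W z x) (hPW.mul (hdd W)))]
  refine integral_congr_ae (hμs.mono fun x hx => ?_)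
  have hzx' := hzx x hx
  have hWx := hW x hx
  simp only
  rw [divDiff_eq_div P (sub_ne_zero.mp hzx'), divDiff_eq_div W (sub_ne_zero.mp hzx')]
  field_simp
  ring

end DivDiffIntegral

theorem stmt4_general (a b : ℝ) (σ : Measure ℝ) [IsFiniteMeasure σ]
    (hsupp : msupport σ ⊆ Set.Icc a b)
    (ℓ₀ ℓ₁ w : Polynomial ℝ)
    (hwz : ∀ z : ℂ, (w.map (algebraMap ℝ ℂ)).IsRoot z → z ∉ (Set.Icc a b).image ((↑) : ℝ → ℂ))
    (L : ℂ → ℂ) (hL : ∀ z : ℂ, L z = (ℓ₀.map (algebraMap ℝ ℂ)).eval z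
        + (ℓ₁.map (algebraMap ℝ ℂ)).eval z * cauchyT σ z)
    -- `L/w` is analytic on `ℂ∖Δ` (L vanishes with multiplicity at the zeros of w):
    (F : ℂ → ℂ) (hF : AnalyticOnNhd ℂ F ((Set.Icc a b).image ((↑) : ℝ → ℂ))ᶜ)
    (hFW : ∀ z ∈ ((Set.Icc a b).image ((↑) : ℝ → ℂ))ᶜ,
        F z * (w.map (algebraMap ℝ ℂ)).eval z = L z)
    (N : ℕ) (hN : 1 ≤ N)
    (hbig : ∃ C R : ℝ, ∀ z : ℂ, R ≤ ‖z‖ → ‖F z‖ ≤ C / ‖z‖ ^ N) :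
    ∀ z ∈ ((Set.Icc a b).image ((↑) : ℝ → ℂ))ᶜ, (w.map (algebraMap ℝ ℂ)).eval z ≠ 0 →
      L z / (w.map (algebraMap ℝ ℂ)).eval z
        = ∫ x, ((ℓ₁.eval x : ℝ) : ℂ) / ((z - (x : ℂ)) * ((w.eval x : ℝ) : ℂ)) ∂σ := by
  set K := (Set.Icc a b).image ((↑) : ℝ → ℂ)
  set P := ℓ₁.map (algebraMap ℝ ℂ)
  set W := w.map (algebraMap ℝ ℂ)
  have hK : IsCompact K := isCompact_Icc.image Complex.continuous_ofReal
  have hσ := ae_mem_of_msupport_subset hsupp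
  have hWs : ∀ x ∈ Set.Icc a b, W.eval (x : ℂ) ≠ 0 := fun x hx h => hwz x h ⟨x, hx, rfl⟩
  set c : ℝ → ℂ := fun x => P.eval (x : ℂ) / W.eval (x : ℂ)
  obtain ⟨M, hM⟩ := isCompact_Icc.exists_bound_of_continuousOn
    (ContinuousOn.div (by fun_prop) (by fun_prop) hWs : ContinuousOn c (Set.Icc a b))
  have hcM : ∀ᵐ x ∂σ, ‖c x‖ ≤ M := hσ.mono hM
  have hcm : AEStronglyMeasurable c σ :=
    (Measurable.div (by fun_prop) (by fun_prop)).aestronglyMeasurable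
  have hG : DifferentiableOn ℂ (fun z => ∫ x, c x / (z - x) ∂σ) Kᶜ := fun z hz =>
    (differentiableAt_integral_div_sub hcm hcM hK.isClosed
      (hσ.mono fun x hx => ⟨x, hx, rfl⟩) hz).differentiableWithinAt
  have hlim : Tendsto (fun z => F z - ∫ x, c x / (z - x) ∂σ) (cocompact ℂ) (𝓝 0) := by
    simpa using (tendsto_cocompact_zero_of_norm_le_div_pow hN hbig).sub
      (tendsto_integral_div_sub_cocompact hcM (hσ.mono fun x hx => abs_le_max_abs_abs hx.1 hx.2))
  have hFG := eqOn_zero_of_mul_eq_of_tendsto hK (hF.differentiableOn.sub hG)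
    ((ℓ₀.map (algebraMap ℝ ℂ)).differentiable.add
      (differentiable_divDiffIntegral P W isCompact_Icc hσ hWs))
    W.differentiable (fun z hz h => hwz z h hz)
    (fun z hz => by
      rw [Pi.sub_apply, Pi.add_apply, mul_sub, mul_comm, hFW z hz, hL, add_sub_assoc,
        eval_mul_cauchyT_sub_eq_divDiffIntegral P W isCompact_Icc hσ hWs hz])
    hlim
  intro z hz hWz
  rw [← hFW z hz, mul_div_cancel_right₀ _ hWz, sub_eq_zero.mp (hFG z hz)]
  refine integral_congr_ae (ae_of_all _ fun x => ?_)
  simp [c, P, W, div_mul_eq_div_div_swap, ← Complex.coe_algebraMap,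
    aeval_algebraMap_apply_eq_algebraMap_eval]

/-- m = 1: if `ℓ₀ + ℓ₁σ̂` vanishes at the zeros of `w` (so that
`(ℓ₀+ℓ₁σ̂)/w` is analytic on `ℂ∖Δ`) and `(ℓ₀+ℓ₁σ̂)(z)/w(z) = O(z^{-N})`, `N ≥ 1`, then
`(ℓ₀(z)+ℓ₁(z)σ̂(z))/w(z) = ∫ ℓ₁(x)/(z-x) · dσ(x)/w(x)` on `ℂ∖Δ` off the zeros of `w`. -/
theorem stmt4 (a b : ℝ) (hab : a ≤ b) (σ : Measure ℝ) [IsFiniteMeasure σ]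
    (hsupp : msupport σ ⊆ Set.Icc a b) (hinf : (msupport σ).Infinite)
    (ℓ₀ ℓ₁ w : Polynomial ℝ) (hw : w ≠ 0)
    (hwz : ∀ z : ℂ, (w.map (algebraMap ℝ ℂ)).IsRoot z → z ∉ (Set.Icc a b).image ((↑) : ℝ → ℂ))
    (L : ℂ → ℂ) (hL : ∀ z : ℂ, L z = (ℓ₀.map (algebraMap ℝ ℂ)).eval z
        + (ℓ₁.map (algebraMap ℝ ℂ)).eval z * cauchyT σ z)
    -- `L/w` is analytic on `ℂ∖Δ` (L vanishes with multiplicity at the zeros of w):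
    (F : ℂ → ℂ) (hF : AnalyticOnNhd ℂ F ((Set.Icc a b).image ((↑) : ℝ → ℂ))ᶜ)
    (hFW : ∀ z ∈ ((Set.Icc a b).image ((↑) : ℝ → ℂ))ᶜ,
        F z * (w.map (algebraMap ℝ ℂ)).eval z = L z)
    (N : ℕ) (hN : 1 ≤ N)
    (hbig : ∃ C R : ℝ, ∀ z : ℂ, R ≤ ‖z‖ → ‖F z‖ ≤ C / ‖z‖ ^ N) :
    ∀ z ∈ ((Set.Icc a b).image ((↑) : ℝ → ℂ))ᶜ, (w.map (algebraMap ℝ ℂ)).eval z ≠ 0 →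
      L z / (w.map (algebraMap ℝ ℂ)).eval z
        = ∫ x, ((ℓ₁.eval x : ℝ) : ℂ) / ((z - (x : ℂ)) * ((w.eval x : ℝ) : ℂ)) ∂σ :=
  stmt4_general a b σ hsupp ℓ₀ ℓ₁ w hwz L hL F hF hFW N hN hbig
end
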